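/- For every path P with at least 4 vertices, h(P) = 1 and mh(P) = 2 (in particular h(P) < mh(P)). -/

import Mathlib

open SimpleGraph

namespace HuntersRabbit

universe u

variable {V : Type u}

/-- `shots S i` is the set `S_{i+1}` shot at (paper, 1-indexed) round `i+1`. -/
def shots (S : List (Finset V)) (i : ℕ) : Finset V := S.getD i ∅

/-- A hunter strategy is a finite sequence of nonempty subsets of vertices. -/
def ValidStrategy (S : List (Finset V)) : Prop := ∀ s ∈ S, s.Nonempty

/-- The hunter strategy `S` uses at most `k` hunters. -/
def Uses (S : List (Finset V)) (k : ℕ) : Prop := ∀ s ∈ S, s.card ≤ k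

/-- A rabbit trajectory of length `ℓ` starting from `W`: a walk `r 0, r 1, …, r ℓ`
with `r 0 ∈ W` (only the values at `0, …, ℓ` are relevant). -/
def Trajectory (G : SimpleGraph V) (W : Set V) (ℓ : ℕ) (r : ℕ → V) : Prop :=
  r 0 ∈ W ∧ ∀ i, i < ℓ → G.Adj (r i) (r (i + 1))

/-- The hunter strategy `S = (S_1, …, S_ℓ)` is winning with respect to `W`:
every rabbit trajectory `(r_0, …, r_ℓ)` starting from `W` satisfies
`r_j ∈ S_{j+1}` for some `0 ≤ j < ℓ`. -/
def IsWinning (G : SimpleGraph V) (W : Set V) (S : List (Finset V)) : Prop :=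
  ∀ r : ℕ → V, Trajectory G W S.length r → ∃ j, j < S.length ∧ r j ∈ shots S j

/-- The contaminated sets: `Zset G W S 0 = W` and
`Zset G W S (i+1) = {x | ∃ y ∈ Zset G W S i \ S_{i+1}, y ~ x}`. -/
def Zset (G : SimpleGraph V) (W : Set V) (S : List (Finset V)) : ℕ → Set V
  | 0 => W
  | i + 1 => {x | ∃ y ∈ Zset G W S i, y ∉ shots S i ∧ G.Adj y x}

/-- `v` is cleared at (paper) round `i+1`: either `v ∈ S_{i+1}`, or
`N(v) ∩ Z_i` is nonempty and contained in `S_{i+1}`. -/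
def ClearedAt (G : SimpleGraph V) (W : Set V) (S : List (Finset V)) (v : V) (i : ℕ) : Prop :=
  v ∈ shots S i ∨
    ((G.neighborSet v ∩ Zset G W S i).Nonempty ∧
      G.neighborSet v ∩ Zset G W S i ⊆ ↑(shots S i))

/-- The strategy is monotone: whenever `v` is cleared at some round and `v ∈ Z_j`
for some later (or equal) round `j`, then `v ∈ S_{j+1}`. -/
def IsMonotoneStrat (G : SimpleGraph V) (W : Set V) (S : List (Finset V)) : Prop :=
  ∀ v : V, ∀ i j : ℕ, i < S.length → i < j → j < S.length →
    ClearedAt G W S v i → v ∈ Zset G W S j → v ∈ shots S j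

/-- The hunter number `h_W(G)`: the minimum `k` such that some winning hunter
strategy with respect to `W` uses `k` hunters (with the convention that it is `0`
for a one-vertex graph). -/
noncomputable def hunterNumW (G : SimpleGraph V) (W : Set V) : ℕ :=
  if Nat.card V = 1 then 0
  else sInf {k | ∃ S : List (Finset V), ValidStrategy S ∧ IsWinning G W S ∧ Uses S k}

/-- The hunter number `h(G) = h_V(G)`. -/
noncomputable def hunterNum (G : SimpleGraph V) : ℕ := hunterNumW G Set.univ

/-- The monotone hunter number `mh_W(G)`. -/
noncomputable def mhunterNumW (G : SimpleGraph V) (W : Set V) : ℕ :=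
  if Nat.card V = 1 then 0
  else sInf {k | ∃ S : List (Finset V),
    ValidStrategy S ∧ IsWinning G W S ∧ IsMonotoneStrat G W S ∧ Uses S k}

/-- The monotone hunter number `mh(G) = mh_V(G)`. -/
noncomputable def mhunterNum (G : SimpleGraph V) : ℕ := mhunterNumW G Set.univ

/-! ### Auxiliary lemmas -/

section Aux

variable {G : SimpleGraph V} {W : Set V} {S : List (Finset V)}

lemma exists_escape :
    ∀ j (x : V), x ∈ Zset G W S j → ∃ r : ℕ → V, r 0 ∈ W ∧
      (∀ i, i < j → G.Adj (r i) (r (i + 1))) ∧ (∀ i, i < j → r i ∉ shots S i) ∧ r j = x := by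
  intro j
  induction j with
  | zero => exact fun x hx => ⟨fun _ => x, hx, by omega, by omega, rfl⟩
  | succ j ih =>
    intro x hx
    obtain ⟨y, hyZ, hyS, hadj⟩ := hx
    obtain ⟨r, hr0, hradj, hrS, hrj⟩ := ih y hyZ
    refine ⟨fun i => if i ≤ j then r i else x, by simpa using hr0, ?_, ?_, by simp⟩
    · intro i hi
      rcases Nat.lt_or_ge i j with h | h
      · simpa [Nat.le_of_lt h, Nat.succ_le_of_lt h] using hradj i h
      · have hij : i = j := by omega
        subst hij
        simpa [hrj, Nat.lt_irrefl] using hadj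
    · intro i hi
      rcases Nat.lt_or_ge i j with h | h
      · simpa [Nat.le_of_lt h] using hrS i h
      · have hij : i = j := by omega
        subst hij
        simpa [hrj] using hyS

lemma not_winning_of_Zset_nonempty (hx : (Zset G W S S.length).Nonempty) :
    ¬ IsWinning G W S := by
  intro hw
  obtain ⟨x, hxZ⟩ := hx
  obtain ⟨r, hr0, hradj, hrS, _⟩ := exists_escape S.length x hxZ
  obtain ⟨j, hj, hjm⟩ := hw r ⟨hr0, hradj⟩
  exact hrS j hj hjm

lemma length_pos_of_winning (hW : W.Nonempty) (hw : IsWinning G W S) :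
    0 < S.length := by
  by_contra h
  obtain ⟨x, hx⟩ := hW
  obtain ⟨j, hj, _⟩ := hw (fun _ => x) ⟨hx, by omega⟩
  omega

lemma shots_mem {i : ℕ} (hi : i < S.length) : shots S i ∈ S := by
  unfold shots
  rw [List.getD_eq_getElem _ _ hi]
  exact List.getElem_mem _

lemma shots_singleton (hv : ValidStrategy S) (hu : Uses S 1) {i : ℕ} (hi : i < S.length)
    {s : V} (hs : s ∈ shots S i) : shots S i = {s} := by
  have hc := hu _ (shots_mem hi)
  exact Finset.eq_singleton_iff_unique_mem.mpr
    ⟨hs, fun y hy => Finset.card_le_one.mp hc y hy s hs⟩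

end Aux

/-! ### Arithmetic sweep lemmas -/

lemma sweep (n : ℕ) (hn : 4 ≤ n) (q : ℕ → ℕ)
    (hadj : ∀ i, i < n - 3 → (q i + 1 = q (i+1) ∨ q (i+1) + 1 = q i))
    (hlt : ∀ i, i ≤ n - 3 → q i < n)
    (hodd : q 0 % 2 = 1)
    (hmiss : ∀ j, j < n - 2 → q j ≠ j + 1) : False := by
  have key : ∀ j, j ≤ n - 3 → j + 3 ≤ q j ∧ (q j + j) % 2 = 1 := by
    intro j
    induction j with
    | zero => intro _; have := hmiss 0 (by omega); omega
    | succ j ih =>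
      intro hj
      have h1 := ih (by omega)
      have h2 := hadj j (by omega)
      have h3 := hmiss (j+1) (by omega)
      omega
  have h1 := key (n-3) le_rfl
  have h2 := hlt (n-3) le_rfl
  omega

lemma parity_walk (ℓ : ℕ) (q : ℕ → ℕ)
    (hadj : ∀ i, i < ℓ → (q i + 1 = q (i+1) ∨ q (i+1) + 1 = q i)) :
    ∀ i, i ≤ ℓ → (q i + i) % 2 = q 0 % 2 := by
  intro i
  induction i with
  | zero => intro _; rfl
  | succ i ih =>
    intro hi
    have h1 := ih (by omega)
    have h2 := hadj i (by omega)
    omega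

/-! ### Path coordinates -/

section Path

variable {G : SimpleGraph V} {n : ℕ}

def vtx (φ : G ≃g SimpleGraph.pathGraph n) (hn : 4 ≤ n) (k : ℕ) : V :=
  φ.symm ⟨min k (n - 1), by omega⟩

variable (φ : G ≃g SimpleGraph.pathGraph n) (hn : 4 ≤ n)

lemma vtx_coord {k : ℕ} (hk : k ≤ n - 1) : ((φ (vtx φ hn k)) : ℕ) = k := by
  unfold vtx
  rw [RelIso.apply_symm_apply]
  simpa using hk

lemma eq_vtx_iff {k : ℕ} (hk : k ≤ n - 1) (x : V) :
    x = vtx φ hn k ↔ ((φ x : ℕ) = k) := by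
  constructor
  · rintro rfl; exact vtx_coord φ hn hk
  · intro h
    have : φ x = φ (vtx φ hn k) := Fin.ext (by rw [h, vtx_coord φ hn hk])
    exact φ.toEquiv.injective this

lemma adj_coord (x y : V) :
    G.Adj x y ↔ ((φ x : ℕ) + 1 = (φ y : ℕ) ∨ (φ y : ℕ) + 1 = (φ x : ℕ)) := by
  rw [← φ.map_adj_iff, SimpleGraph.pathGraph_adj]

lemma coord_lt (x : V) : (φ x : ℕ) < n := (φ x).isLt

lemma vtx_adj {j k : ℕ} (hj : j ≤ n - 1) (hk : k ≤ n - 1) (h : j + 1 = k) :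
    G.Adj (vtx φ hn j) (vtx φ hn k) := by
  rw [adj_coord φ, vtx_coord φ hn hj, vtx_coord φ hn hk]
  omega

/-! ### The 1-hunter strategy -/

def hS1 : List (Finset V) :=
  (List.range (n - 2)).map (fun j => ({vtx φ hn (j + 1)} : Finset V))

def hStrat : List (Finset V) :=
  hS1 φ hn ++ (List.replicate ((n - 1) % 2) ({vtx φ hn 0} : Finset V) ++ hS1 φ hn)

lemma hS1_length : (hS1 φ hn).length = n - 2 := by simp [hS1]

lemma hStrat_length : (hStrat φ hn).length = (n - 2) + ((n - 1) % 2 + (n - 2)) := by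
  simp [hStrat, hS1]

lemma shots_hS1 {i : ℕ} (hi : i < n - 2) : shots (hS1 φ hn) i = {vtx φ hn (i + 1)} := by
  unfold shots hS1
  rw [List.getD_eq_getElem _ _ (by simpa using hi)]
  simp

lemma shots_hStrat_left {i : ℕ} (hi : i < n - 2) :
    shots (hStrat φ hn) i = {vtx φ hn (i + 1)} := by
  unfold shots hStrat
  rw [List.getD_append _ _ _ _ (by rw [hS1_length]; omega)]
  exact shots_hS1 φ hn hi

lemma shots_hStrat_right {j : ℕ} (hj : j < n - 2) :
    shots (hStrat φ hn) ((n - 2) + (n - 1) % 2 + j) = {vtx φ hn (j + 1)} := by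
  unfold shots hStrat
  rw [List.getD_append_right _ _ _ _ (by rw [hS1_length]; omega)]
  rw [List.getD_append_right _ _ _ _ (by rw [hS1_length, List.length_replicate]; omega)]
  rw [hS1_length, List.length_replicate]
  rw [show (n-2) + (n-1) % 2 + j - (n-2) - (n-1) % 2 = j from by omega]
  exact shots_hS1 φ hn hj

lemma hStrat_valid : ValidStrategy (hStrat φ hn) := by
  intro s hs
  simp only [hStrat, hS1, List.mem_append, List.mem_map, List.mem_replicate] at hs
  rcases hs with ⟨j, _, rfl⟩ | ⟨_, rfl⟩ | ⟨j, _, rfl⟩ <;> simp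

lemma hStrat_uses : Uses (hStrat φ hn) 1 := by
  intro s hs
  simp only [hStrat, hS1, List.mem_append, List.mem_map, List.mem_replicate] at hs
  rcases hs with ⟨j, _, rfl⟩ | ⟨_, rfl⟩ | ⟨j, _, rfl⟩ <;> simp

lemma hStrat_winning : IsWinning G Set.univ (hStrat φ hn) := by
  intro r htraj
  obtain ⟨-, hadj⟩ := htraj
  rw [hStrat_length] at hadj
  by_contra hcon
  push_neg at hcon
  rw [hStrat_length] at hcon
  set ℓ := (n - 2) + ((n - 1) % 2 + (n - 2)) with hℓ
  set q : ℕ → ℕ := fun i => (φ (r i) : ℕ) with hqdef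
  have hq : ∀ i, i < ℓ → (q i + 1 = q (i+1) ∨ q (i+1) + 1 = q i) := by
    intro i hi
    exact (adj_coord φ _ _).mp (hadj i hi)
  have hmiss : ∀ j t, t + j < ℓ → shots (hStrat φ hn) (t + j) = {vtx φ hn (j + 1)} →
      j + 1 ≤ n - 1 → q (t + j) ≠ j + 1 := by
    intro j t hlt hsh hle heq
    have := hcon (t + j) hlt
    rw [hsh] at this
    exact this (Finset.mem_singleton.mpr ((eq_vtx_iff φ hn hle _).mpr heq))
  rcases Nat.mod_two_eq_zero_or_one (q 0) with h0 | h1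
  · -- q 0 even : second sweep (starting at odd round t) catches the rabbit
    set t := (n - 2) + (n - 1) % 2 with ht
    have hodd : q t % 2 = 1 := by
      have hp := parity_walk ℓ q hq t (by omega)
      omega
    refine sweep n hn (fun j => q (t + j)) ?_ ?_ ?_ ?_
    · intro i hi
      exact hq (t + i) (by omega)
    · intro i _
      exact coord_lt φ _
    · simpa using hodd
    · intro j hj
      exact hmiss j t (by omega) (shots_hStrat_right φ hn hj) (by omega)
  · -- q 0 odd : first sweep catches the rabbit
    refine sweep n hn q ?_ ?_ h1 ?_
    · intro i hi
      exact hq i (by omega)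
    · intro i _
      exact coord_lt φ _
    · intro j hj
      have := hmiss j 0 (by omega) (by simpa using shots_hStrat_left φ hn hj) (by omega)
      simpa using this

/-! ### The 2-hunter monotone strategy -/

variable [DecidableEq V]

def mStrat : List (Finset V) :=
  (List.range (n - 1)).map (fun j => ({vtx φ hn j, vtx φ hn (j + 1)} : Finset V))

lemma mStrat_length : (mStrat φ hn).length = n - 1 := by simp [mStrat]

lemma shots_mStrat {i : ℕ} (hi : i < n - 1) :
    shots (mStrat φ hn) i = {vtx φ hn i, vtx φ hn (i + 1)} := by
  unfold shots mStrat
  rw [List.getD_eq_getElem _ _ (by simpa using hi)]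
  simp

lemma mem_pair {i : ℕ} (hi : i + 1 ≤ n - 1) (x : V) :
    x ∈ ({vtx φ hn i, vtx φ hn (i + 1)} : Finset V) ↔
      ((φ x : ℕ) = i ∨ (φ x : ℕ) = i + 1) := by
  rw [Finset.mem_insert, Finset.mem_singleton,
    eq_vtx_iff φ hn (show i ≤ n - 1 by omega), eq_vtx_iff φ hn hi]

lemma mStrat_valid : ValidStrategy (mStrat φ hn) := by
  intro s hs
  simp only [mStrat, List.mem_map, List.mem_range] at hs
  obtain ⟨j, -, rfl⟩ := hs
  exact ⟨vtx φ hn j, by simp⟩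

lemma mStrat_uses : Uses (mStrat φ hn) 2 := by
  intro s hs
  simp only [mStrat, List.mem_map, List.mem_range] at hs
  obtain ⟨j, -, rfl⟩ := hs
  exact (Finset.card_insert_le _ _).trans (by simp)

lemma mStrat_winning : IsWinning G Set.univ (mStrat φ hn) := by
  intro r htraj
  obtain ⟨-, hadj⟩ := htraj
  rw [mStrat_length] at hadj
  by_contra hcon
  push_neg at hcon
  rw [mStrat_length] at hcon
  have key : ∀ j, j ≤ n - 2 → j ≤ (φ (r j) : ℕ) := by
    intro j
    induction j with
    | zero => intro _; exact Nat.zero_le _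
    | succ j ih =>
      intro hj
      have h1 := ih (by omega)
      have hm := hcon j (by omega)
      rw [shots_mStrat φ hn (by omega), mem_pair φ hn (by omega)] at hm
      have h2 := (adj_coord φ _ _).mp (hadj j (by omega))
      omega
  have h1 := key (n - 2) le_rfl
  have hm := hcon (n - 2) (by omega)
  rw [shots_mStrat φ hn (by omega), mem_pair φ hn (by omega)] at hm
  have h2 := coord_lt φ (r (n - 2))
  omega

lemma mZbound : ∀ j, j ≤ n - 1 → ∀ x, x ∈ Zset G Set.univ (mStrat φ hn) j →
    j ≤ (φ x : ℕ) := by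
  intro j
  induction j with
  | zero => intro _ x _; exact Nat.zero_le _
  | succ j ih =>
    intro hj x hx
    obtain ⟨y, hyZ, hyS, hadj⟩ := hx
    have hy := ih (by omega) y hyZ
    rw [shots_mStrat φ hn (by omega), mem_pair φ hn (by omega)] at hyS
    have h2 := (adj_coord φ _ _).mp hadj
    omega

lemma mStrat_mono : IsMonotoneStrat G Set.univ (mStrat φ hn) := by
  intro v i j hi hij hj hcl hz
  rw [mStrat_length] at hi hj
  have hv : j ≤ (φ v : ℕ) := mZbound φ hn j (by omega) v hz
  rw [shots_mStrat φ hn hj, mem_pair φ hn (by omega)]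
  rcases hcl with hc | ⟨⟨y, hy⟩, hsub⟩
  · rw [shots_mStrat φ hn hi, mem_pair φ hn (by omega)] at hc
    omega
  · have hys : y ∈ ↑(shots (mStrat φ hn) i) := hsub hy
    rw [shots_mStrat φ hn hi, mem_pair φ hn (by omega)] at hys
    have hadjvy : G.Adj v y := hy.1
    have h2 := (adj_coord φ _ _).mp hadjvy
    omega

/-! ### No monotone winning strategy with one hunter -/

include φ hn in
lemma no_mono_one {S : List (Finset V)} (hval : ValidStrategy S)
    (hwin : IsWinning G Set.univ S) (hmono : IsMonotoneStrat G Set.univ S)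
    (huse : Uses S 1) : False := by
  have hlen : 0 < S.length :=
    length_pos_of_winning ⟨vtx φ hn 0, Set.mem_univ _⟩ hwin
  obtain ⟨s, hs⟩ := hval _ (shots_mem hlen)
  have hs0 : shots S 0 = {s} := shots_singleton hval huse hlen hs
  have ht : (φ s : ℕ) < n := coord_lt φ s
  set t := (φ s : ℕ) with htdef
  obtain ⟨a, b, ha01, hb, hat, hbt⟩ : ∃ a b : ℕ, (a = 0 ∨ a = 1) ∧
      (b = n - 2 ∨ b = n - 1) ∧ (a = 1 ↔ t = 1) ∧ (b = n - 2 ↔ t = n - 2) := by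
    by_cases h1 : t = 1 <;> by_cases h2 : t = n - 2
    · exact ⟨1, n - 2, Or.inr rfl, Or.inl rfl, by omega, by omega⟩
    · exact ⟨1, n - 1, Or.inr rfl, Or.inr rfl, by omega, by omega⟩
    · exact ⟨0, n - 2, Or.inl rfl, Or.inl rfl, by omega, by omega⟩
    · exact ⟨0, n - 1, Or.inl rfl, Or.inr rfl, by omega, by omega⟩
  have harith : ∀ p, a ≤ p → p ≤ b →
      ∃ c, a ≤ c ∧ c ≤ b ∧ c ≠ t ∧ (p + 1 = c ∨ c + 1 = p) := by
    intro p hpa hpb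
    by_cases h1 : p + 1 ≤ b ∧ p + 1 ≠ t
    · exact ⟨p + 1, by omega, h1.1, h1.2, Or.inl rfl⟩
    · push_neg at h1
      exact ⟨p - 1, by omega, by omega, by omega, Or.inr (by omega)⟩
  set U : Set V := {x | a ≤ (φ x : ℕ) ∧ (φ x : ℕ) ≤ b} with hU
  have hsU : s ∈ U := ⟨by omega, by omega⟩
  have hstab : ∀ x ∈ U, ∃ y, y ∈ U ∧ y ≠ s ∧ G.Adj y x := by
    intro x hx
    obtain ⟨hxa, hxb⟩ := hx
    obtain ⟨c, hc1, hc2, hc3, hc4⟩ := harith (φ x : ℕ) hxa hxb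
    have hcn : c ≤ n - 1 := by omega
    refine ⟨vtx φ hn c, ⟨?_, ?_⟩, ?_, ?_⟩
    · show a ≤ (φ (vtx φ hn c) : ℕ); rw [vtx_coord φ hn hcn]; exact hc1
    · show (φ (vtx φ hn c) : ℕ) ≤ b; rw [vtx_coord φ hn hcn]; exact hc2
    · intro h
      apply hc3
      rw [htdef, ← h, vtx_coord φ hn hcn]
    · rw [adj_coord φ, vtx_coord φ hn hcn]
      omega
  have key : ∀ j, j ≤ S.length → U ⊆ Zset G Set.univ S j := by
    intro j
    induction j with
    | zero => intro _ x _; exact Set.mem_univ x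
    | succ j ih =>
      intro hj
      have hZ := ih (by omega)
      have hsj : shots S j = {s} := by
        rcases Nat.eq_zero_or_pos j with h | h
        · rw [h]; exact hs0
        · have hsmem : s ∈ shots S j :=
            hmono s 0 j hlen h (by omega)
              (Or.inl (by rw [hs0]; exact Finset.mem_singleton_self s))
              (hZ hsU)
          exact shots_singleton hval huse (by omega) hsmem
      intro x hx
      obtain ⟨y, hyU, hys, hadj⟩ := hstab x hx
      exact ⟨y, hZ hyU, by rw [hsj]; simpa using hys, hadj⟩
  have hone : vtx φ hn 1 ∈ U := by
    constructor <;> rw [vtx_coord φ hn (by omega)] <;> omega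
  exact not_winning_of_Zset_nonempty ⟨vtx φ hn 1, key S.length le_rfl hone⟩ hwin

end Path

/-- For every path `P` with at least 4 vertices, `h(P) = 1` and `mh(P) = 2`
(in particular `h(P) < mh(P)`). -/
theorem path_hunter_numbers {V : Type} (G : SimpleGraph V) (n : ℕ) (hn : 4 ≤ n)
    (hiso : Nonempty (G ≃g SimpleGraph.pathGraph n)) :
    hunterNum G = 1 ∧ mhunterNum G = 2 := by
  classical
  obtain ⟨φ⟩ := hiso
  have hcard : Nat.card V = n := Nat.card_eq_of_equiv_fin φ.toEquiv
  have hc1 : ¬ (Nat.card V = 1) := by omega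
  constructor
  · rw [hunterNum, hunterNumW, if_neg hc1]
    have h1 : 1 ∈ {k | ∃ S : List (Finset V),
        ValidStrategy S ∧ IsWinning G Set.univ S ∧ Uses S k} :=
      ⟨hStrat φ hn, hStrat_valid φ hn, hStrat_winning φ hn, hStrat_uses φ hn⟩
    have hge : ∀ k ∈ {k | ∃ S : List (Finset V),
        ValidStrategy S ∧ IsWinning G Set.univ S ∧ Uses S k}, 1 ≤ k := by
      rintro k ⟨S, hv, hw, hu⟩
      by_contra hk
      have hlen : 0 < S.length :=
        length_pos_of_winning ⟨vtx φ hn 0, Set.mem_univ _⟩ hw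
      have hne := hv _ (shots_mem hlen)
      have hcle := hu _ (shots_mem hlen)
      have := hne.card_pos
      omega
    exact le_antisymm (Nat.sInf_le h1) (hge _ (Nat.sInf_mem ⟨1, h1⟩))
  · rw [mhunterNum, mhunterNumW, if_neg hc1]
    have h2 : 2 ∈ {k | ∃ S : List (Finset V), ValidStrategy S ∧ IsWinning G Set.univ S ∧
        IsMonotoneStrat G Set.univ S ∧ Uses S k} :=
      ⟨mStrat φ hn, mStrat_valid φ hn, mStrat_winning φ hn, mStrat_mono φ hn, mStrat_uses φ hn⟩
    have hge : ∀ k ∈ {k | ∃ S : List (Finset V), ValidStrategy S ∧ IsWinning G Set.univ S ∧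
        IsMonotoneStrat G Set.univ S ∧ Uses S k}, 2 ≤ k := by
      rintro k ⟨S, hv, hw, hm, hu⟩
      by_contra hk
      push_neg at hk
      exact no_mono_one φ hn hv hw hm (fun s hs => (hu s hs).trans (by omega))
    exact le_antisymm (Nat.sInf_le h2) (hge _ (Nat.sInf_mem ⟨2, h2⟩))

end HuntersRabbit
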